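/- Suppose L_u, L_v, L_{uv}, L_{vu} > 0, τ ≥ 1, and η_u ≤ 1/(√6 · τ · L_u · max{1, (L_{vu}L_{uv})/(L_u L_v)}), η_v ≤ 1/(√6 · τ · L_v · max{1, (L_{vu}L_{uv})/(L_u L_v)}). Define A = L_u² η_u + L_{vu}² η_v and B = L_v² η_v + L_{uv}² η_u. Then 3τ²η_v²L_v²B + 3τ²η_u²L_{uv}²A ≤ B. -/

import Mathlib

/-!
Write `M = max 1 (L_vu L_uv / (L_u L_v))`. The step-size conditions say exactly that
`6 τ² M² L_u² η_u² ≤ 1` and `6 τ² M² L_v² η_v² ≤ 1`. Since `M ≥ 1` and `L_vu L_uv ≤ M L_u L_v`,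
they give `6 τ² L_v² η_v² ≤ 1`, `6 τ² L_u² η_u² ≤ 1` and `6 τ² L_vu² L_uv² η_u² ≤ L_v²`, which
bound the three summands `3τ²η_v²L_v² B`, `3τ²η_u²L_uv² L_u² η_u`, `3τ²η_u²L_uv² L_vu² η_v` of the
left-hand side by `B / 2`, `L_uv² η_u / 2` and `L_v² η_v / 2`; these add up to `B`.
-/

lemma sq_mul_le_one_of_le_one_div {d η : ℝ} (hd : 0 < d) (hη : 0 ≤ η) (h : η ≤ 1 / d) :
    (d * η) ^ 2 ≤ 1 :=
  pow_le_one₀ (by positivity) (by rwa [le_div_iff₀ hd, mul_comm] at h)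

lemma le_max_one_div_mul {a c : ℝ} (hc : 0 < c) : a ≤ max 1 (a / c) * c :=
  (div_le_iff₀ hc).1 (le_max_right _ _)

lemma six_mul_sq_le_one_of_le_one_div {τ L M η : ℝ} (hτ : 0 < τ) (hL : 0 < L) (hM : 0 < M)
    (hη : 0 ≤ η) (h : η ≤ 1 / (Real.sqrt 6 * τ * L * M)) :
    6 * τ ^ 2 * M ^ 2 * L ^ 2 * η ^ 2 ≤ 1 := by
  have key := sq_mul_le_one_of_le_one_div (by positivity) hη h
  have hsq : Real.sqrt 6 ^ 2 = 6 := Real.sq_sqrt (by norm_num)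
  linear_combination key - τ ^ 2 * L ^ 2 * M ^ 2 * η ^ 2 * hsq

theorem lemma7_second (Lu Lv Luv Lvu τ ηu ηv : ℝ)
    (hLu : 0 < Lu) (hLv : 0 < Lv) (hLuv : 0 < Luv) (hLvu : 0 < Lvu)
    (hτ : 1 ≤ τ) (hηu : 0 < ηu) (hηv : 0 < ηv)
    (hu : ηu ≤ 1 / (Real.sqrt 6 * τ * Lu * max 1 (Lvu * Luv / (Lu * Lv))))
    (hv : ηv ≤ 1 / (Real.sqrt 6 * τ * Lv * max 1 (Lvu * Luv / (Lu * Lv)))) :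
    3 * τ ^ 2 * ηv ^ 2 * Lv ^ 2 * (Lv ^ 2 * ηv + Luv ^ 2 * ηu)
      + 3 * τ ^ 2 * ηu ^ 2 * Luv ^ 2 * (Lu ^ 2 * ηu + Lvu ^ 2 * ηv)
      ≤ Lv ^ 2 * ηv + Luv ^ 2 * ηu := by
  have hcross := le_max_one_div_mul (a := Lvu * Luv) (mul_pos hLu hLv)
  set M := max 1 (Lvu * Luv / (Lu * Lv))
  have hM : 1 ≤ M := le_max_left _ _
  have hτ0 : 0 < τ := one_pos.trans_le hτ
  have ku := six_mul_sq_le_one_of_le_one_div hτ0 hLu (one_pos.trans_le hM) hηu.le hu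
  have kv := six_mul_sq_le_one_of_le_one_div hτ0 hLv (one_pos.trans_le hM) hηv.le hv
  have hM2 : 1 ≤ M ^ 2 := one_le_pow₀ hM
  have hcross2 : (Lvu * Luv) ^ 2 ≤ (M * (Lu * Lv)) ^ 2 := pow_le_pow_left₀ (by positivity) hcross 2
  have bu : 6 * τ ^ 2 * Lu ^ 2 * ηu ^ 2 ≤ 1 := by
    linear_combination ku + 6 * τ ^ 2 * Lu ^ 2 * ηu ^ 2 * hM2
  have bv : 6 * τ ^ 2 * Lv ^ 2 * ηv ^ 2 ≤ 1 := by
    linear_combination kv + 6 * τ ^ 2 * Lv ^ 2 * ηv ^ 2 * hM2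
  have buv : 6 * τ ^ 2 * Lvu ^ 2 * Luv ^ 2 * ηu ^ 2 ≤ Lv ^ 2 := by
    linear_combination Lv ^ 2 * ku + 6 * τ ^ 2 * ηu ^ 2 * hcross2
  linear_combination (Lv ^ 2 * ηv + Luv ^ 2 * ηu) / 2 * bv + Luv ^ 2 * ηu / 2 * bu + ηv / 2 * buv
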